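/- Let m ∈ ℕ, 0 ≤ α < 1, R > 0, and M₀ ≥ 1 with M₀^{(1−α)/2 + 1/4} > 2^{2m+2}·R. Then for every v ∈ h^{-mα}_0 with ‖v‖_{h^{-mα}} ≤ R, every M ≥ M₀, and every λ ∈ Ext_M, the operator S_{mλ} on ℓ²(ℤ,ℂ) satisfies ‖S_{mλ}‖ < 1/2. -/

import Mathlib

open scoped BigOperators
noncomputable section

/-- The weight `⟨k⟩ = 1 + |k|`. -/
def wt (k : ℤ) : ℝ := 1 + |(k : ℝ)|

/-- `a ∈ h^s`: square-summability of `a` with weight `⟨k⟩^{2s}`. -/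
def MemHs (s : ℝ) (a : ℤ → ℂ) : Prop :=
  Summable fun k : ℤ => wt k ^ (2 * s) * ‖a k‖ ^ 2

/-- The `h^s` norm. -/
def hsNorm (s : ℝ) (a : ℤ → ℂ) : ℝ :=
  Real.sqrt (∑' k : ℤ, wt k ^ (2 * s) * ‖a k‖ ^ 2)

/-- `λ` is a periodic eigenvalue of `v`. -/
def IsPeriodicEigenvalue (m : ℕ) (α : ℝ) (v : ℤ → ℂ) (lam : ℂ) : Prop :=
  ∃ a : ℤ → ℂ, a ≠ 0 ∧ MemHs ((m : ℝ) * (2 - α)) a ∧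
    ∀ k : ℤ, (k : ℂ) ^ (2 * m) * (Real.pi : ℂ) ^ (2 * m) * a k
      + ∑' j : ℤ, v (k - j) * a j = lam * a k

/-- `|λ - k^{2m} π^{2m}|`. -/
def diagAbs (m : ℕ) (lam : ℂ) (k : ℤ) : ℝ :=
  ‖lam - (k : ℂ) ^ (2 * m) * (Real.pi : ℂ) ^ (2 * m)‖

/-- The matrix `S_{mλ}(k,j)`. -/
def Smat (m : ℕ) (v : ℤ → ℂ) (lam : ℂ) (k j : ℤ) : ℂ :=
  v (k - j) / ((Real.sqrt (diagAbs m lam k) * Real.sqrt (diagAbs m lam j) : ℝ) : ℂ)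

/-- The matrix `S` defines a bounded operator on `ℓ²(ℤ, ℂ)` of norm at most `c`. -/
def MatOpNormLE (S : ℤ → ℤ → ℂ) (c : ℝ) : Prop :=
  ∃ T : lp (fun _ : ℤ => ℂ) 2 →L[ℂ] lp (fun _ : ℤ => ℂ) 2,
    ‖T‖ ≤ c ∧ ∀ a : lp (fun _ : ℤ => ℂ) 2, ∀ k : ℤ, T a k = ∑' j : ℤ, S k j * a j

/-- The matrix `S` defines a bounded operator on `ℓ²(ℤ, ℂ)` of norm less than `c`. -/
def MatOpNormLT (S : ℤ → ℤ → ℂ) (c : ℝ) : Prop :=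
  ∃ T : lp (fun _ : ℤ => ℂ) 2 →L[ℂ] lp (fun _ : ℤ => ℂ) 2,
    ‖T‖ < c ∧ ∀ a : lp (fun _ : ℤ => ℂ) 2, ∀ k : ℤ, T a k = ∑' j : ℤ, S k j * a j

/-- `Ext_M = {λ : Re λ ≤ |Im λ| - M}`. -/
def ExtSet (M : ℝ) : Set ℂ := {lam : ℂ | lam.re ≤ |lam.im| - M}

/-- `Vert^m_n(r)`. -/
def VertSet (m n : ℕ) (r : ℝ) : Set ℂ :=
  {lam : ℂ | |(lam - (n : ℂ) ^ (2 * m) * (Real.pi : ℂ) ^ (2 * m)).re| ≤ (n : ℝ) ^ m * Real.pi ^ (2 * m)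
    ∧ r ≤ ‖lam - (n : ℂ) ^ (2 * m) * (Real.pi : ℂ) ^ (2 * m)‖}

/-!
For `λ ∈ Ext_M` one has `|λ - k^{2m}π^{2m}| ≥ (M + (π|k|)^{2m})/2` for every `k`, hence
`Σ_k |λ - k^{2m}π^{2m}|⁻¹ ≤ 6/√M`. We bound the Hilbert–Schmidt norm of `S_{mλ}`, summing
along the diagonals `k - j = l`: one of `k`, `j` has modulus at least `|l|/2`, so diagonal `l`
contributes at most `|v(l)|² · 24 / (√M (M + 2l^{2m}))`, and
`⟨l⟩^{2mα} ≤ 2^{(2m-1)α} M^{α-1} (M + 2l^{2m})` turns this into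
`‖S_{mλ}‖²_HS ≤ 24 · 2^{(2m-1)α} M^{α-3/2} ‖v‖²_{h^{-mα}}`, which is `< 1/4` by the choice of `M₀`.
-/

open Real

lemma inv_sq_add_sq_le_telescope {s c : ℝ} (hs : 0 < s) (hc : 0 < c) (n : ℕ) :
    (s ^ 2 + (c * (n + 1)) ^ 2)⁻¹ ≤ 2 / c * ((s + c * n)⁻¹ - (s + c * (n + 1))⁻¹) := by
  have hn : (0 : ℝ) ≤ n := n.cast_nonneg
  have h₁ : 0 < s + c * n := by positivity
  have h₂ : 0 < s + c * (n + 1) := by positivity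
  rw [inv_sub_inv h₁.ne' h₂.ne', inv_eq_one_div, div_mul_div_comm,
    div_le_div_iff₀ (by positivity) (by positivity)]
  nlinarith [sq_nonneg (s - c * (n + 1)), mul_pos hc hs, mul_pos hc hc]

lemma tsum_nat_inv_sq_add_sq_le {s c : ℝ} (hs : 0 < s) (hc : 0 < c) :
    Summable (fun n : ℕ => (s ^ 2 + (c * (n + 1)) ^ 2)⁻¹) ∧
      ∑' n : ℕ, (s ^ 2 + (c * (n + 1)) ^ 2)⁻¹ ≤ 2 / (c * s) := by
  have hnonneg (n : ℕ) : 0 ≤ (s ^ 2 + (c * (n + 1)) ^ 2)⁻¹ := by positivity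
  have hpartial (N : ℕ) : ∑ n ∈ Finset.range N, (s ^ 2 + (c * (n + 1)) ^ 2)⁻¹ ≤ 2 / (c * s) := by
    set u : ℕ → ℝ := fun n => 2 / c * (s + c * n)⁻¹
    calc ∑ n ∈ Finset.range N, (s ^ 2 + (c * (n + 1)) ^ 2)⁻¹
        ≤ ∑ n ∈ Finset.range N, (u n - u (n + 1)) := by
          gcongr with n
          simpa only [u, mul_sub, Nat.cast_succ] using inv_sq_add_sq_le_telescope hs hc n
      _ = u 0 - u N := Finset.sum_range_sub' u N
      _ ≤ u 0 := sub_le_self _ (by positivity)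
      _ = 2 / (c * s) := by simp only [u, Nat.cast_zero, mul_zero, add_zero]; ring
  exact ⟨summable_of_sum_range_le hnonneg hpartial, Real.tsum_le_of_sum_range_le hnonneg hpartial⟩

lemma tsum_int_inv_sq_add_sq_le {s c : ℝ} (hs : 0 < s) (hc : 0 < c) :
    Summable (fun j : ℤ => (s ^ 2 + (c * j) ^ 2)⁻¹) ∧
      ∑' j : ℤ, (s ^ 2 + (c * j) ^ 2)⁻¹ ≤ (s ^ 2)⁻¹ + 4 / (c * s) := by
  obtain ⟨hsum, hle⟩ := tsum_nat_inv_sq_add_sq_le hs hc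
  have hpos : (fun n : ℕ => (s ^ 2 + (c * ((n + 1 : ℤ) : ℝ)) ^ 2)⁻¹) =
      fun n : ℕ => (s ^ 2 + (c * (n + 1)) ^ 2)⁻¹ := by
    ext n; push_cast; ring
  have hneg : (fun n : ℕ => (s ^ 2 + (c * ((-(n + 1) : ℤ) : ℝ)) ^ 2)⁻¹) =
      fun n : ℕ => (s ^ 2 + (c * (n + 1)) ^ 2)⁻¹ := by
    ext n; push_cast; ring
  set f : ℤ → ℝ := fun j => (s ^ 2 + (c * j) ^ 2)⁻¹
  have hsum₁ : Summable fun n : ℕ => f (n + 1) := by simp only [f]; rwa [hpos]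
  have hsum₂ : Summable fun n : ℕ => f (-(n + 1)) := by simp only [f]; rwa [hneg]
  refine ⟨.of_add_one_of_neg_add_one hsum₁ hsum₂, ?_⟩
  rw [tsum_of_add_one_of_neg_add_one hsum₁ hsum₂]
  simp only [f, hpos, hneg, Int.cast_zero, mul_zero, zero_pow two_ne_zero, add_zero]
  linarith [show (4 : ℝ) / (c * s) = 2 / (c * s) + 2 / (c * s) by ring]

lemma inv_mul_le_inv_add_inv_div {a b D : ℝ} (ha : 0 < a) (hb : 0 < b) (hD : 0 < D)
    (h : D ≤ max a b) : (a * b)⁻¹ ≤ (a⁻¹ + b⁻¹) / D := by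
  rw [mul_inv, div_eq_mul_inv]
  have ha' := inv_pos.mpr ha
  have hb' := inv_pos.mpr hb
  rcases le_max_iff.mp h with h | h
  · nlinarith [inv_anti₀ hD h]
  · nlinarith [inv_anti₀ hD h]

lemma tsum_inv_mul_shift_le {G : Type*} [AddGroup G] {d : G → ℝ} (hd : ∀ k, 0 < d k)
    (hsum : Summable fun k => (d k)⁻¹) (l : G) {D : ℝ} (hD : 0 < D)
    (hmax : ∀ j, D ≤ max (d (l + j)) (d j)) :
    Summable (fun j => (d (l + j) * d j)⁻¹) ∧
      ∑' j, (d (l + j) * d j)⁻¹ ≤ 2 * (∑' k, (d k)⁻¹) / D := by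
  have hshift : Summable fun j => (d (l + j))⁻¹ :=
    (Equiv.addLeft l).summable_iff (f := fun k => (d k)⁻¹) |>.mpr hsum
  have hbound (j : G) : (d (l + j) * d j)⁻¹ ≤ ((d (l + j))⁻¹ + (d j)⁻¹) / D :=
    inv_mul_le_inv_add_inv_div (hd _) (hd _) hD (hmax j)
  have hsum' := (hshift.add hsum).div_const D
  have hpair : Summable (fun j => (d (l + j) * d j)⁻¹) :=
    .of_nonneg_of_le (fun j => (inv_pos.mpr (mul_pos (hd _) (hd _))).le) hbound hsum'
  refine ⟨hpair, ?_⟩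
  calc ∑' j, (d (l + j) * d j)⁻¹ ≤ ∑' j, ((d (l + j))⁻¹ + (d j)⁻¹) / D :=
        hpair.tsum_le_tsum hbound hsum'
    _ = 2 * (∑' k, (d k)⁻¹) / D := by
        rw [tsum_div_const, hshift.tsum_add hsum, two_mul,
          show ∑' j, (d (l + j))⁻¹ = ∑' k, (d k)⁻¹ from (Equiv.addLeft l).tsum_eq fun k => (d k)⁻¹]

def shearEquiv (G : Type*) [AddGroup G] : G × G ≃ G × G where
  toFun p := (p.1 + p.2, p.2)
  invFun p := (p.1 - p.2, p.2)
  left_inv p := by simp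
  right_inv p := by simp

lemma tsum_le_of_diagonals {G : Type*} [AddGroup G] {f : G × G → ℝ} (hf : 0 ≤ f)
    {b : G → ℝ} (hdiag : ∀ l, Summable fun j => f (l + j, j))
    (hle : ∀ l, ∑' j, f (l + j, j) ≤ b l) (hb : Summable b) :
    Summable f ∧ ∑' p, f p ≤ ∑' l, b l := by
  have hdiags : Summable fun l => ∑' j, f (l + j, j) :=
    .of_nonneg_of_le (fun l => tsum_nonneg fun j => hf _) hle hb
  have hg : Summable (f ∘ shearEquiv G) :=
    (summable_prod_of_nonneg (f := f ∘ shearEquiv G) fun p => hf (shearEquiv G p)).mpr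
      ⟨hdiag, hdiags⟩
  refine ⟨(shearEquiv G).summable_iff.mp hg, ?_⟩
  calc ∑' p, f p = ∑' p, (f ∘ shearEquiv G) p := ((shearEquiv G).tsum_eq f).symm
    _ = ∑' l, ∑' j, f (l + j, j) := hg.tsum_prod' hdiag
    _ ≤ ∑' l, b l := hdiags.tsum_le_tsum hle hb

section HilbertSchmidt

variable {ι : Type*}

lemma memℓp_two_iff_summable_sq {f : ι → ℂ} : Memℓp f 2 ↔ Summable fun i => ‖f i‖ ^ 2 := by
  rw [memℓp_gen_iff (by norm_num)]
  norm_cast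

lemma lp_two_norm_sq (f : lp (fun _ : ι => ℂ) 2) : ‖f‖ ^ 2 = ∑' i, ‖f i‖ ^ 2 := by
  have := lp.norm_rpow_eq_tsum (p := 2) (by norm_num) f
  norm_cast at this

theorem exists_lp_two_clm_of_summable_sq {S : ι → ι → ℂ}
    (hS : Summable fun p : ι × ι => ‖S p.1 p.2‖ ^ 2) :
    ∃ T : lp (fun _ : ι => ℂ) 2 →L[ℂ] lp (fun _ : ι => ℂ) 2,
      ‖T‖ ≤ √(∑' p : ι × ι, ‖S p.1 p.2‖ ^ 2) ∧ ∀ a k, T a k = ∑' j, S k j * a j := by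
  obtain ⟨hrow, hrows⟩ := (summable_prod_of_nonneg
    (f := fun p : ι × ι => ‖S p.1 p.2‖ ^ 2) fun p => sq_nonneg _).mp hS
  let r (k : ι) : lp (fun _ : ι => ℂ) 2 :=
    ⟨fun j => starRingEnd ℂ (S k j), memℓp_two_iff_summable_sq.mpr (by simpa using hrow k)⟩
  have hr (k : ι) : ‖r k‖ ^ 2 = ∑' j, ‖S k j‖ ^ 2 := by
    rw [lp_two_norm_sq]
    simp [r]
  have hcs (a : lp (fun _ : ι => ℂ) 2) (k : ι) :
      ‖inner ℂ (r k) a‖ ^ 2 ≤ (∑' j, ‖S k j‖ ^ 2) * ‖a‖ ^ 2 := by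
    rw [← hr, ← mul_pow]
    gcongr
    exact norm_inner_le_norm _ _
  have hmem (a : lp (fun _ : ι => ℂ) 2) : Memℓp (fun k => inner ℂ (r k) a) 2 :=
    memℓp_two_iff_summable_sq.mpr
      (.of_nonneg_of_le (fun _ => sq_nonneg _) (hcs a) (hrows.mul_right _))
  let T₀ : lp (fun _ : ι => ℂ) 2 →ₗ[ℂ] lp (fun _ : ι => ℂ) 2 :=
    { toFun a := ⟨fun k => inner ℂ (r k) a, hmem a⟩
      map_add' a b := by ext k; exact inner_add_right _ _ _
      map_smul' c a := by ext k; exact inner_smul_right _ _ _ }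
  have hbound (a : lp (fun _ : ι => ℂ) 2) :
      ‖T₀ a‖ ≤ √(∑' p : ι × ι, ‖S p.1 p.2‖ ^ 2) * ‖a‖ := by
    rw [← sqrt_sq (norm_nonneg (T₀ a)), ← sqrt_sq (norm_nonneg a), ← sqrt_mul (by positivity)]
    refine sqrt_le_sqrt ?_
    rw [lp_two_norm_sq, hS.tsum_prod' hrow, ← tsum_mul_right]
    exact Summable.tsum_le_tsum (hcs a) (memℓp_two_iff_summable_sq.mp (hmem a))
      (hrows.mul_right _)
  refine ⟨T₀.mkContinuous _ hbound, T₀.mkContinuous_norm_le (sqrt_nonneg _) hbound,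
    fun a k => ?_⟩
  change inner ℂ (r k) a = _
  simp [r, lp.inner_eq_tsum, mul_comm]

end HilbertSchmidt

lemma add_div_two_le_norm_sub_of_mem_extSet {M : ℝ} {lam : ℂ} (hlam : lam ∈ ExtSet M) (μ : ℝ) :
    (M + μ) / 2 ≤ ‖lam - μ‖ := by
  have him : |lam.im| ≤ ‖lam - μ‖ := by simpa using Complex.abs_im_le_norm (lam - μ)
  have hre : μ - lam.re ≤ ‖lam - μ‖ := by
    have := Complex.abs_re_le_norm (lam - μ)
    rw [Complex.sub_re, Complex.ofReal_re, abs_sub_comm] at this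
    exact (le_abs_self _).trans this
  have hlam' : lam.re ≤ |lam.im| - M := hlam
  linarith

lemma add_div_two_le_diagAbs {m : ℕ} {M : ℝ} {lam : ℂ} (hlam : lam ∈ ExtSet M) (k : ℤ) :
    (M + (π * |(k : ℝ)|) ^ (2 * m)) / 2 ≤ diagAbs m lam k := by
  have : (k : ℂ) ^ (2 * m) * (π : ℂ) ^ (2 * m) = (((π * |(k : ℝ)|) ^ (2 * m) : ℝ) : ℂ) := by
    rw [mul_pow, (even_two_mul m).pow_abs]; push_cast; ring
  rw [diagAbs, this]
  exact add_div_two_le_norm_sub_of_mem_extSet hlam _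

lemma diagAbs_pos {m : ℕ} {M : ℝ} {lam : ℂ} (hlam : lam ∈ ExtSet M) (hM : 0 < M) (k : ℤ) :
    0 < diagAbs m lam k :=
  lt_of_lt_of_le (by positivity) (add_div_two_le_diagAbs hlam k)

lemma sq_le_pi_mul_abs_pow {m : ℕ} (hm : 0 < m) (k : ℤ) :
    (π * k) ^ 2 ≤ (π * |(k : ℝ)|) ^ (2 * m) := by
  rcases eq_or_ne k 0 with rfl | hk
  · simp [hm.ne']
  rw [← sq_abs, abs_mul, abs_of_pos pi_pos]
  refine pow_le_pow_right₀ ?_ (by omega)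
  nlinarith [(by exact_mod_cast Int.one_le_abs hk : (1 : ℝ) ≤ |(k : ℝ)|), pi_gt_three]

lemma two_mul_pow_le_pi_mul_abs_pow {m : ℕ} (hm : 0 < m) {l k : ℤ}
    (hlk : |(l : ℝ)| ≤ 2 * |(k : ℝ)|) :
    2 * (l : ℝ) ^ (2 * m) ≤ (π * |(k : ℝ)|) ^ (2 * m) := by
  have hπ : 2 ≤ (π / 2) ^ (2 * m) :=
    calc (2 : ℝ) ≤ (π / 2) ^ 2 := by nlinarith [pi_gt_three]
      _ ≤ (π / 2) ^ (2 * m) := pow_le_pow_right₀ (by linarith [pi_gt_three]) (by omega)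
  calc 2 * (l : ℝ) ^ (2 * m) ≤ (π / 2) ^ (2 * m) * |(l : ℝ)| ^ (2 * m) := by
        rw [(even_two_mul m).pow_abs]
        exact mul_le_mul_of_nonneg_right hπ ((even_two_mul m).pow_nonneg _)
    _ = (π / 2 * |(l : ℝ)|) ^ (2 * m) := (mul_pow _ _ _).symm
    _ ≤ (π * |(k : ℝ)|) ^ (2 * m) :=
        pow_le_pow_left₀ (by positivity) (by nlinarith [pi_pos]) _

lemma add_two_mul_pow_div_two_le_max_diagAbs {m : ℕ} (hm : 0 < m) {M : ℝ} {lam : ℂ}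
    (hlam : lam ∈ ExtSet M) (l j : ℤ) :
    (M + 2 * (l : ℝ) ^ (2 * m)) / 2 ≤ max (diagAbs m lam (l + j)) (diagAbs m lam j) := by
  have key {k : ℤ} (hk : |(l : ℝ)| ≤ 2 * |(k : ℝ)|) :
      (M + 2 * (l : ℝ) ^ (2 * m)) / 2 ≤ diagAbs m lam k := by
    have := two_mul_pow_le_pi_mul_abs_pow hm hk
    linarith [add_div_two_le_diagAbs (m := m) hlam k]
  have htri : |(l : ℝ)| ≤ |((l + j : ℤ) : ℝ)| + |(j : ℝ)| := by
    simpa using abs_sub ((l + j : ℤ) : ℝ) j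
  rcases le_total |((l + j : ℤ) : ℝ)| |(j : ℝ)| with h | h
  · exact le_max_of_le_right (key (by linarith))
  · exact le_max_of_le_left (key (by linarith))

lemma tsum_inv_diagAbs_le {m : ℕ} (hm : 0 < m) {M : ℝ} (hM : 1 ≤ M) {lam : ℂ}
    (hlam : lam ∈ ExtSet M) :
    Summable (fun k => (diagAbs m lam k)⁻¹) ∧ ∑' k, (diagAbs m lam k)⁻¹ ≤ 6 / √M := by
  set s := √M
  have hs : 1 ≤ s := Real.one_le_sqrt.mpr hM
  have hsM : s ^ 2 = M := Real.sq_sqrt (by linarith)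
  obtain ⟨hsum, hle⟩ := tsum_int_inv_sq_add_sq_le (by linarith : 0 < s) pi_pos
  have hpt (k : ℤ) : (diagAbs m lam k)⁻¹ ≤ 2 * (s ^ 2 + (π * k) ^ 2)⁻¹ := by
    calc (diagAbs m lam k)⁻¹ ≤ ((M + (π * k) ^ 2) / 2)⁻¹ := by
          refine inv_anti₀ (by positivity) ?_
          linarith [add_div_two_le_diagAbs (m := m) hlam k, sq_le_pi_mul_abs_pow hm k]
      _ = 2 * (s ^ 2 + (π * k) ^ 2)⁻¹ := by rw [inv_div, hsM, div_eq_mul_inv]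
  have hsum' := hsum.mul_left 2
  have hd_summable : Summable (fun k => (diagAbs m lam k)⁻¹) :=
    .of_nonneg_of_le (fun k => inv_nonneg.mpr (diagAbs_pos hlam (by linarith) k).le) hpt hsum'
  refine ⟨hd_summable, ?_⟩
  have h₁ : (s ^ 2)⁻¹ ≤ s⁻¹ := inv_anti₀ (by positivity) (by nlinarith)
  have h₂ : 4 / (π * s) ≤ 2 / s := by
    rw [div_le_div_iff₀ (by positivity) (by positivity)]
    nlinarith [pi_gt_three]
  calc ∑' k, (diagAbs m lam k)⁻¹ ≤ ∑' k : ℤ, 2 * (s ^ 2 + (π * k) ^ 2)⁻¹ :=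
        hd_summable.tsum_le_tsum hpt hsum'
    _ ≤ 2 * ((s ^ 2)⁻¹ + 4 / (π * s)) := by rw [tsum_mul_left]; gcongr
    _ ≤ 2 * (s⁻¹ + 2 / s) := by gcongr
    _ = 6 / s := by ring

lemma wt_pos (k : ℤ) : 0 < wt k := by
  rw [wt]
  positivity

lemma wt_pow_le {m : ℕ} (hm : 0 < m) (l : ℤ) :
    wt l ^ (2 * m) ≤ 2 ^ (2 * m - 1) * (1 + 2 * (l : ℝ) ^ (2 * m)) := by
  rcases eq_or_ne l 0 with rfl | hl
  · simpa [wt, hm.ne'] using one_le_pow₀ one_le_two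
  have hwt : wt l ≤ 2 * |(l : ℝ)| := by
    rw [wt]
    linarith [(by exact_mod_cast Int.one_le_abs hl : (1 : ℝ) ≤ |(l : ℝ)|)]
  calc wt l ^ (2 * m) ≤ (2 * |(l : ℝ)|) ^ (2 * m) :=
        pow_le_pow_left₀ (wt_pos l).le hwt _
    _ = 2 ^ (2 * m - 1) * (2 * (l : ℝ) ^ (2 * m)) := by
        rw [mul_pow, (even_two_mul m).pow_abs, ← mul_assoc, ← pow_succ,
          Nat.sub_add_cancel (by omega)]
    _ ≤ 2 ^ (2 * m - 1) * (1 + 2 * (l : ℝ) ^ (2 * m)) := by gcongr; linarith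

lemma wt_rpow_le {m : ℕ} (hm : 0 < m) {α M : ℝ} (hα0 : 0 ≤ α) (hα1 : α ≤ 1) (hM : 1 ≤ M)
    (l : ℤ) :
    wt l ^ (2 * ((m : ℝ) * α)) ≤
      (2 ^ (2 * m - 1) : ℝ) ^ α * M ^ (α - 1) * (M + 2 * (l : ℝ) ^ (2 * m)) := by
  set A := M + 2 * (l : ℝ) ^ (2 * m) with hA_def
  have hA : M ≤ A := le_add_of_nonneg_right (by positivity [(even_two_mul m).pow_nonneg (l : ℝ)])
  have hA₀ : 0 < A := by linarith
  calc wt l ^ (2 * ((m : ℝ) * α)) = (wt l ^ (2 * m)) ^ α := by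
        rw [← Real.rpow_natCast, ← Real.rpow_mul (wt_pos l).le]; push_cast; ring_nf
    _ ≤ (2 ^ (2 * m - 1) * A) ^ α := by
        refine Real.rpow_le_rpow (pow_nonneg (wt_pos l).le _) ((wt_pow_le hm l).trans ?_) hα0
        gcongr
        linarith
    _ = (2 ^ (2 * m - 1) : ℝ) ^ α * (A ^ (α - 1) * A) := by
        rw [Real.mul_rpow (by positivity) hA₀.le, Real.rpow_sub_one hA₀.ne',
          div_mul_cancel₀ _ hA₀.ne']
    _ ≤ (2 ^ (2 * m - 1) : ℝ) ^ α * (M ^ (α - 1) * A) := by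
        gcongr _ * (?_ * _)
        exact Real.rpow_le_rpow_of_nonpos (by linarith) hA (by linarith)
    _ = _ := by ring

lemma norm_smat_sq (m : ℕ) (v : ℤ → ℂ) (lam : ℂ) (k j : ℤ) :
    ‖Smat m v lam k j‖ ^ 2 = ‖v (k - j)‖ ^ 2 / (diagAbs m lam k * diagAbs m lam j) := by
  have hk : 0 ≤ diagAbs m lam k := norm_nonneg _
  have hj : 0 ≤ diagAbs m lam j := norm_nonneg _
  rw [Smat, norm_div, Complex.norm_real, Real.norm_of_nonneg (by positivity), div_pow, mul_pow,
    Real.sq_sqrt hk, Real.sq_sqrt hj]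

def smatHSBound (m : ℕ) (α M : ℝ) : ℝ :=
  (2 ^ (2 * m - 1) : ℝ) ^ α * M ^ (α - 1) * (24 / √M)

section SmatEstimate

variable {m : ℕ} {α M : ℝ} {v : ℤ → ℂ} {lam : ℂ}

lemma tsum_norm_smat_diagonal_le (hm : 0 < m) (hα0 : 0 ≤ α) (hα1 : α ≤ 1) (hM : 1 ≤ M)
    (hlam : lam ∈ ExtSet M) (l : ℤ) :
    Summable (fun j => ‖Smat m v lam (l + j) j‖ ^ 2) ∧
      ∑' j, ‖Smat m v lam (l + j) j‖ ^ 2 ≤ wt l ^ (2 * -((m : ℝ) * α)) * ‖v l‖ ^ 2 *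
        smatHSBound m α M := by
  set A := M + 2 * (l : ℝ) ^ (2 * m)
  have hA : 0 < A := by positivity [(even_two_mul m).pow_nonneg (l : ℝ)]
  obtain ⟨hG, hGle⟩ := tsum_inv_diagAbs_le hm hM hlam
  obtain ⟨hpair, hpairle⟩ := tsum_inv_mul_shift_le (diagAbs_pos hlam (by linarith)) hG l
    (half_pos hA) (add_two_mul_pow_div_two_le_max_diagAbs hm hlam l)
  have hentry : (fun j => ‖Smat m v lam (l + j) j‖ ^ 2) =
      fun j => ‖v l‖ ^ 2 * (diagAbs m lam (l + j) * diagAbs m lam j)⁻¹ := by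
    ext j
    rw [norm_smat_sq, add_sub_cancel_right, div_eq_mul_inv]
  have hvl : ‖v l‖ ^ 2 = wt l ^ (2 * -((m : ℝ) * α)) * ‖v l‖ ^ 2 * wt l ^ (2 * ((m : ℝ) * α)) := by
    rw [mul_right_comm, ← Real.rpow_add (wt_pos l)]
    simp
  have hwtA : wt l ^ (2 * ((m : ℝ) * α)) / A ≤ (2 ^ (2 * m - 1) : ℝ) ^ α * M ^ (α - 1) :=
    (div_le_iff₀ hA).mpr (wt_rpow_le hm hα0 hα1 hM l)
  clear_value A -- so that `ring` treats `A` as an atom rather than unfolding it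
  rw [hentry]
  refine ⟨hpair.mul_left _, ?_⟩
  rw [tsum_mul_left]
  calc ‖v l‖ ^ 2 * ∑' j, (diagAbs m lam (l + j) * diagAbs m lam j)⁻¹
      ≤ ‖v l‖ ^ 2 * (2 * (6 / √M) / (A / 2)) := by
        gcongr
        exact hpairle.trans (by gcongr)
    _ = wt l ^ (2 * -((m : ℝ) * α)) * ‖v l‖ ^ 2 * (wt l ^ (2 * ((m : ℝ) * α)) / A) * (24 / √M) := by
        conv_lhs => rw [hvl]
        ring
    _ ≤ wt l ^ (2 * -((m : ℝ) * α)) * ‖v l‖ ^ 2 * ((2 ^ (2 * m - 1) : ℝ) ^ α * M ^ (α - 1)) *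
          (24 / √M) := by
        gcongr
        exact mul_nonneg (Real.rpow_nonneg (wt_pos l).le _) (sq_nonneg _)
    _ = _ := by rw [smatHSBound]; ring

lemma tsum_norm_smat_sq_le (hm : 0 < m) (hα0 : 0 ≤ α) (hα1 : α ≤ 1) (hM : 1 ≤ M)
    (hlam : lam ∈ ExtSet M) (hv : MemHs (-((m : ℝ) * α)) v) :
    Summable (fun p : ℤ × ℤ => ‖Smat m v lam p.1 p.2‖ ^ 2) ∧
      ∑' p : ℤ × ℤ, ‖Smat m v lam p.1 p.2‖ ^ 2 ≤ hsNorm (-((m : ℝ) * α)) v ^ 2 *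
        smatHSBound m α M := by
  have hdiag := tsum_norm_smat_diagonal_le (v := v) hm hα0 hα1 hM hlam
  obtain ⟨hsum, hle⟩ := tsum_le_of_diagonals
    (f := fun p : ℤ × ℤ => ‖Smat m v lam p.1 p.2‖ ^ 2) (fun p => sq_nonneg _)
    (fun l => (hdiag l).1) (fun l => (hdiag l).2) (hv.mul_right _)
  refine ⟨hsum, hle.trans_eq ?_⟩
  rw [tsum_mul_right, hsNorm,
    Real.sq_sqrt (tsum_nonneg fun k => mul_nonneg (Real.rpow_nonneg (wt_pos k).le _) (sq_nonneg _))]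

end SmatEstimate

lemma sq_mul_smatHSBound_lt_quarter {m : ℕ} (hm : 0 < m) {α R M : ℝ} (hα1 : α ≤ 1) (hR : 0 ≤ R)
    (hM : 1 ≤ M) (hMR : 2 ^ (2 * m + 2) * R < M ^ ((1 - α) / 2 + 1 / 4)) :
    R ^ 2 * smatHSBound m α M < 1 / 4 := by
  set P := M ^ ((1 - α) / 2 + 1 / 4)
  have hM₀ : 0 < M := by linarith
  have hP : 0 < P := Real.rpow_pos_of_pos hM₀ _
  have hMP : M ^ (α - 1) / √M = (P ^ 2)⁻¹ := by
    rw [Real.sqrt_eq_rpow, ← Real.rpow_sub hM₀, ← Real.rpow_natCast, ← Real.rpow_mul hM₀.le,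
      ← Real.rpow_neg hM₀.le]
    ring_nf
  set X : ℝ := 2 ^ (2 * m)
  have hX : 4 ≤ X := by
    calc (4 : ℝ) = 2 ^ 2 := by norm_num
      _ ≤ X := pow_le_pow_right₀ one_le_two (by omega)
  have hc : (2 ^ (2 * m - 1) : ℝ) ^ α ≤ X / 2 := by
    calc (2 ^ (2 * m - 1) : ℝ) ^ α ≤ (2 ^ (2 * m - 1) : ℝ) ^ (1 : ℝ) :=
          Real.rpow_le_rpow_of_exponent_le (one_le_pow₀ one_le_two) hα1
      _ = X / 2 := by
          rw [Real.rpow_one, eq_div_iff two_ne_zero, ← pow_succ, Nat.sub_add_cancel (by omega)]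
  have hRP : (4 * X * R) ^ 2 < P ^ 2 := by
    have : (2 : ℝ) ^ (2 * m + 2) = 4 * X := by rw [pow_add]; ring
    exact pow_lt_pow_left₀ (this ▸ hMR) (by positivity) two_ne_zero
  calc R ^ 2 * smatHSBound m α M
      = 24 * (2 ^ (2 * m - 1) : ℝ) ^ α * R ^ 2 / P ^ 2 := by
        rw [smatHSBound, div_eq_mul_inv _ (P ^ 2), ← hMP]
        ring
    _ ≤ 12 * X * R ^ 2 / P ^ 2 := by gcongr ?_ * _ / _; linarith
    _ < 12 * X * (P ^ 2 / (16 * X ^ 2)) / P ^ 2 := by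
        gcongr
        rw [lt_div_iff₀ (by positivity)]
        linarith
    _ = 3 / (4 * X) := by field_simp; ring
    _ ≤ 3 / 16 := by gcongr; linarith
    _ < 1 / 4 := by norm_num

theorem statement14_general (m : ℕ) (hm : 0 < m) (α R M₀ : ℝ)
    (hα0 : 0 ≤ α) (hα1 : α < 1) (hM₀ : 1 ≤ M₀)
    (hM₀R : M₀ ^ ((1 - α) / 2 + 1 / 4) > 2 ^ (2 * m + 2) * R) :
    ∀ v : ℤ → ℂ, MemHs (-((m : ℝ) * α)) v → v 0 = 0 → hsNorm (-((m : ℝ) * α)) v ≤ R →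
      ∀ M : ℝ, M₀ ≤ M → ∀ lam ∈ ExtSet M,
        MatOpNormLT (Smat m v lam) (1 / 2) := by
  intro v hv _ hvR M hM lam hlam
  have hM₁ : 1 ≤ M := hM₀.trans hM
  have hR : 0 ≤ R := (Real.sqrt_nonneg _).trans hvR
  have hMR : 2 ^ (2 * m + 2) * R < M ^ ((1 - α) / 2 + 1 / 4) :=
    hM₀R.trans_le (Real.rpow_le_rpow (by linarith) hM (by linarith))
  obtain ⟨hsum, hle⟩ := tsum_norm_smat_sq_le (v := v) hm hα0 hα1.le hM₁ hlam hv
  obtain ⟨T, hT, hTS⟩ := exists_lp_two_clm_of_summable_sq hsum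
  refine ⟨T, hT.trans_lt ?_, hTS⟩
  refine (Real.sqrt_lt' (by norm_num)).mpr (hle.trans_lt ?_)
  calc hsNorm (-((m : ℝ) * α)) v ^ 2 * smatHSBound m α M
      ≤ R ^ 2 * smatHSBound m α M := by
        gcongr
        · rw [smatHSBound]; positivity
        · exact Real.sqrt_nonneg _
    _ < 1 / 4 := sq_mul_smatHSBound_lt_quarter hm hα1.le hR hM₁ hMR
    _ = (1 / 2) ^ 2 := by norm_num

theorem statement14 (m : ℕ) (hm : 0 < m) (α R M₀ : ℝ)
    (hα0 : 0 ≤ α) (hα1 : α < 1) (hR : 0 < R) (hM₀ : 1 ≤ M₀)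
    (hM₀R : M₀ ^ ((1 - α) / 2 + 1 / 4) > 2 ^ (2 * m + 2) * R) :
    ∀ v : ℤ → ℂ, MemHs (-((m : ℝ) * α)) v → v 0 = 0 → hsNorm (-((m : ℝ) * α)) v ≤ R →
      ∀ M : ℝ, M₀ ≤ M → ∀ lam ∈ ExtSet M,
        MatOpNormLT (Smat m v lam) (1 / 2) :=
  statement14_general m hm α R M₀ hα0 hα1 hM₀ hM₀R
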